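/- For any odd integer n ≥ 3, the (1+n)×(1+n) block matrix Z_n with top-left entry θ = n·cos(π/n)/(1 + cos(π/n)), first row and column equal to −1 on entries 1,…,n, and bottom-right block I_n + ((n − θ)/(2θ))·A_{C_n}, is positive semidefinite. -/

import Mathlib

/-!
Write `x = (x₀, v)` with `v : Fin n → ℝ`, let `c = cos (π / n)`, `S = ∑ vᵢ` and `wᵢ = vᵢ - S / n`.
The off-diagonal weight of the cycle block is `(n - θ) / (2θ) = 1 / (2c)`, and the all-ones
vector is an eigenvector of that block with eigenvalue `1 + 1 / c = n / θ`. Hence completing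
the square in `x₀` and centring `v` gives
`xᵀ Z x = θ (x₀ - S / θ)² + (c ∑ wᵢ² + ∑ wᵢ wᵢ₊₁) / c`.
The last bracket is nonnegative because the least eigenvalue of the odd `n`-cycle is
`-2 cos (π / n)`. That inequality is proved by eliminating `w₁, …, w_{n-1}` one at a time
(an `LDLᵀ` factorisation along the path), the pivots being ratios of the sines `sin (kπ / n)`.
-/

open Real

/-- The dual optimal matrix `Z_n` for the KCBS SDP on the odd `n`-cycle:
top-left entry `θ = n cos(π/n)/(1+cos(π/n))`, border entries `−1`, diagonal `1`,
entries `(n−θ)/(2θ)` on cycle-adjacent pairs of `{1,…,n}`, zero elsewhere. -/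
noncomputable def kcbsDual (n : ℕ) : Matrix (Fin (n + 1)) (Fin (n + 1)) ℝ :=
  fun i j =>
    let θ : ℝ := n * Real.cos (π / n) / (1 + Real.cos (π / n))
    if i.val = 0 ∧ j.val = 0 then θ
    else if i.val = 0 ∨ j.val = 0 then -1
    else if i = j then 1
    else if j.val = i.val % n + 1 ∨ i.val = j.val % n + 1 then (n - θ) / (2 * θ)
    else 0

open Finset Matrix

/-- For `0 < α` and `(i + 1) α < π`, the minimum over `w₁, …, wᵢ` of the partial form
`2 cos α ∑_{1 ≤ j ≤ i} w_j² + 2 ∑_{k ≤ i} w_k w_{k+1} + cos α · w₀²` is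
`sturmRemainder α ((i + 1) α) ((-1)ⁱ w₀) w_{i+1}`. -/
noncomputable def sturmRemainder (α x a b : ℝ) : ℝ :=
  (-sin (x - α) * b ^ 2 + 2 * sin α * a * b + sin α * cos x * a ^ 2) / sin x

lemma sturmRemainder_add_le {α x : ℝ} (hx : 0 < sin x) (hxα : 0 < sin (x + α)) (a b d : ℝ) :
    sturmRemainder α (x + α) (-a) d ≤
      sturmRemainder α x a b + 2 * cos α * b ^ 2 + 2 * b * d := by
  have hsq : sturmRemainder α x a b + 2 * cos α * b ^ 2 + 2 * b * d
      - sturmRemainder α (x + α) (-a) d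
      = (sin (x + α) * b + sin x * d + sin α * a) ^ 2 / (sin x * sin (x + α)) := by
    unfold sturmRemainder
    rw [add_sub_cancel_right]
    field_simp
    rw [sin_sub, sin_add, cos_add]
    linear_combination (sin α ^ 2 * a ^ 2) * cos_sq_add_sin_sq x
  have : 0 ≤ (sin (x + α) * b + sin x * d + sin α * a) ^ 2 / (sin x * sin (x + α)) := by
    positivity
  linarith

lemma sturmRemainder_le_pathForm {α : ℝ} (hα : 0 < α) (w : ℕ → ℝ) {i : ℕ}
    (hi : (i + 1) * α < π) :
    sturmRemainder α ((i + 1) * α) ((-1) ^ i * w 0) (w (i + 1)) ≤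
      2 * cos α * ∑ j ∈ range i, w (j + 1) ^ 2 + 2 * ∑ k ∈ range (i + 1), w k * w (k + 1)
        + cos α * w 0 ^ 2 := by
  have hsin : ∀ k : ℕ, k ≤ i → 0 < sin ((k + 1) * α) := fun k hk =>
    sin_pos_of_pos_of_lt_pi (by positivity) (lt_of_le_of_lt (by gcongr) hi)
  induction i with
  | zero =>
    have := (hsin 0 le_rfl).ne'
    simp only [CharP.cast_eq_zero, zero_add, one_mul] at this ⊢
    refine le_of_eq ?_
    simp only [sturmRemainder, sub_self, sin_zero, pow_zero, range_zero, sum_empty, range_one,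
      sum_singleton]
    field_simp
    ring
  | succ i ih =>
    have hcast : ((i + 1 : ℕ) + 1 : ℝ) * α = (i + 1) * α + α := by push_cast; ring
    have hstep := sturmRemainder_add_le (hsin i (by omega)) (hcast ▸ hsin (i + 1) le_rfl)
      ((-1) ^ i * w 0) (w (i + 1)) (w (i + 1 + 1))
    have ih := ih (by nlinarith) (fun k hk => hsin k (by omega))
    rw [hcast, pow_succ, mul_neg_one, neg_mul, sum_range_succ, sum_range_succ _ (i + 1)]
    linarith

lemma sturmRemainder_pi_sub {α : ℝ} (hα : sin α ≠ 0) (a b : ℝ) :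
    sturmRemainder α (π - α) a b = -2 * cos α * b ^ 2 + 2 * a * b - cos α * a ^ 2 := by
  rw [sturmRemainder, sin_pi_sub, cos_pi_sub, sub_sub, ← two_mul, sin_pi_sub, sin_two_mul]
  field_simp
  ring

theorem cos_pi_div_mul_sum_sq_add_sum_mul_succ_nonneg {n : ℕ} (hodd : Odd n) (w : ℕ → ℝ)
    (hw : w n = w 0) :
    0 ≤ cos (π / n) * ∑ i ∈ range n, w i ^ 2 + ∑ i ∈ range n, w i * w (i + 1) := by
  obtain ⟨k, rfl⟩ := hodd
  rcases k with _ | m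
  · simp only [mul_zero, zero_add] at hw
    simp [hw, sq]
  set α := π / ((2 * (m + 1) + 1 : ℕ) : ℝ)
  have hα : 0 < α := by positivity
  have hlast : ((2 * m + 1 : ℕ) + 1 : ℝ) * α = π - α := by
    simp only [α]; field_simp; push_cast; ring
  have hpath := sturmRemainder_le_pathForm hα w (i := 2 * m + 1) (by rw [hlast]; linarith)
  -- At `π - α` the remainder is exactly minus the terms of the closing edge `w₀ w_{n-1}`.
  rw [hlast, sturmRemainder_pi_sub (sin_pos_of_pos_of_lt_pi hα
      (div_lt_self pi_pos (by norm_cast; omega))).ne',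
    (by simpa using Odd.neg_one_pow (odd_two_mul_add_one m) : ((-1 : ℝ) ^ (2 * m + 1)) = -1)]
    at hpath
  have hsq : ∑ i ∈ range (2 * (m + 1) + 1), w i ^ 2
      = w 0 ^ 2 + ∑ j ∈ range (2 * m + 1), w (j + 1) ^ 2 + w (2 * m + 1 + 1) ^ 2 := by
    rw [sum_range_succ', show 2 * (m + 1) = 2 * m + 1 + 1 by ring, sum_range_succ]; ring
  have hprod : ∑ i ∈ range (2 * (m + 1) + 1), w i * w (i + 1)
      = ∑ k ∈ range (2 * m + 1 + 1), w k * w (k + 1) + w (2 * m + 1 + 1) * w 0 := by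
    rw [sum_range_succ, ← hw]; rfl
  rw [hsq, hprod]
  linarith

open Fin.NatCast in
theorem cos_pi_div_mul_sum_sq_add_sum_mul_add_one_nonneg {n : ℕ} [NeZero n] (hodd : Odd n)
    (w : Fin n → ℝ) : 0 ≤ cos (π / n) * ∑ i, w i ^ 2 + ∑ i, w i * w (i + 1) := by
  have key := cos_pi_div_mul_sum_sq_add_sum_mul_succ_nonneg hodd (fun k : ℕ => w (k : Fin n))
    (by simp)
  simpa only [← Fin.sum_univ_eq_sum_range, Nat.cast_succ, Fin.cast_val_eq_self] using key

theorem sum_sub_mean_mul_sub_mean_comp_perm {ι : Type*} [Fintype ι] [Nonempty ι]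
    (σ : Equiv.Perm ι) (v : ι → ℝ) :
    ∑ i, (v i - (∑ j, v j) / Fintype.card ι) * (v (σ i) - (∑ j, v j) / Fintype.card ι)
      = ∑ i, v i * v (σ i) - (∑ i, v i) ^ 2 / Fintype.card ι := by
  have hcard : (Fintype.card ι : ℝ) ≠ 0 := Nat.cast_ne_zero.mpr Fintype.card_ne_zero
  have hσ : ∑ i, v (σ i) = ∑ i, v i := Equiv.sum_comp σ v
  simp only [sub_mul, mul_sub, sum_sub_distrib, ← sum_mul, ← mul_sum, hσ, sum_const,
    card_univ, nsmul_eq_mul]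
  field_simp
  ring

namespace Fin

variable {n : ℕ} [NeZero n]

lemma eq_add_one_iff (i j : Fin n) : j = i + 1 ↔ j.val = (i.val + 1) % n := by
  rw [Fin.ext_iff, Fin.val_add, Fin.val_one', Nat.add_mod_mod]

lemma add_one_ne_self (hn : 2 ≤ n) (i : Fin n) : i + 1 ≠ i := by
  rw [Ne, add_eq_left, Fin.ext_iff, Fin.val_one', Fin.val_zero, Nat.mod_eq_of_lt (by omega)]
  omega

lemma sub_one_ne_self (hn : 2 ≤ n) (i : Fin n) : i - 1 ≠ i := by
  rw [Ne, sub_eq_self, Fin.ext_iff, Fin.val_one', Fin.val_zero, Nat.mod_eq_of_lt (by omega)]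
  omega

lemma add_one_ne_sub_one (hn : 3 ≤ n) (i : Fin n) : i + 1 ≠ i - 1 := by
  intro h
  have h1 := congrArg (· + 1) h
  simp only [sub_add_cancel, add_assoc, add_eq_left] at h1
  have h2 := congrArg Fin.val h1
  rw [Fin.val_add, Fin.val_one', Nat.mod_eq_of_lt (by omega : 1 < n), Fin.val_zero,
    Nat.mod_eq_of_lt (by omega : 2 < n)] at h2
  omega

lemma sum_ite_cycle_mul (hn : 3 ≤ n) (a b : ℝ) (v : Fin n → ℝ) (i : Fin n) :
    ∑ j, (if i = j then a else if j = i + 1 ∨ i = j + 1 then b else 0) * v j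
      = a * v i + b * v (i + 1) + b * v (i - 1) := by
  have h1 := add_one_ne_self (by omega) i
  have h2 := sub_one_ne_self (by omega) i
  have h3 := add_one_ne_sub_one hn i
  have hsplit : ∀ j, (if i = j then a else if j = i + 1 ∨ i = j + 1 then b else 0) * v j =
      (if j = i then a * v j else 0) + (if j = i + 1 then b * v j else 0)
        + (if j = i - 1 then b * v j else 0) := by
    intro j
    have hj : i = j + 1 ↔ j = i - 1 := by rw [eq_sub_iff_add_eq, eq_comm]
    simp only [hj]
    by_cases h0 : j = i
    · subst h0; simp [h1.symm, h2.symm]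
    by_cases hp : j = i + 1
    · subst hp; simp [h1, h1.symm, h3]
    by_cases hm : j = i - 1
    · subst hm; simp [h2, h2.symm, h3.symm]
    simp [h0, hp, hm, Ne.symm h0]
  simp only [hsplit, sum_add_distrib, sum_ite_eq', mem_univ, if_true]

lemma sum_mul_sum_ite_cycle_mul (hn : 3 ≤ n) (a b : ℝ) (v : Fin n → ℝ) :
    ∑ i, v i * ∑ j, (if i = j then a else if j = i + 1 ∨ i = j + 1 then b else 0) * v j
      = a * ∑ i, v i ^ 2 + 2 * b * ∑ i, v i * v (i + 1) := by
  have hshift : ∑ i, v i * v (i - 1) = ∑ i, v i * v (i + 1) := by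
    rw [← Equiv.sum_comp (Equiv.addRight (1 : Fin n))]
    simp [mul_comm]
  calc _ = ∑ i, (a * v i ^ 2 + b * (v i * v (i + 1)) + b * (v i * v (i - 1))) := by
          simp only [sum_ite_cycle_mul hn]
          exact sum_congr rfl fun i _ => by ring
    _ = _ := by
          rw [sum_add_distrib, sum_add_distrib, ← mul_sum, ← mul_sum, ← mul_sum, hshift]
          ring

end Fin

lemma cos_pi_div_pos {n : ℕ} (hn : 3 ≤ n) : 0 < cos (π / n) := by
  have hn' : (3 : ℝ) ≤ n := by exact_mod_cast hn
  apply cos_pos_of_mem_Ioo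
  constructor
  · have : 0 < π / n := by positivity
    linarith [pi_pos]
  · rw [div_lt_iff₀ (by positivity)]
    nlinarith [pi_pos]

noncomputable def kcbsTheta (n : ℕ) : ℝ := n * cos (π / n) / (1 + cos (π / n))

lemma kcbsTheta_pos {n : ℕ} (hn : 3 ≤ n) : 0 < kcbsTheta n := by
  have := cos_pi_div_pos hn
  have : (0 : ℝ) < n := by positivity
  unfold kcbsTheta
  positivity

lemma sub_kcbsTheta_div_two_mul_kcbsTheta {n : ℕ} (hn : 3 ≤ n) :
    (n - kcbsTheta n) / (2 * kcbsTheta n) = (2 * cos (π / n))⁻¹ := by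
  have := cos_pi_div_pos hn
  have : (n : ℝ) ≠ 0 := by positivity
  unfold kcbsTheta
  field_simp
  ring

lemma kcbsDual_isHermitian (n : ℕ) : (kcbsDual n).IsHermitian := by
  ext i j
  simp only [conjTranspose_apply, kcbsDual, star_trivial]
  split_ifs <;> first | rfl | omega

@[simp] lemma kcbsDual_zero_zero (n : ℕ) : kcbsDual n 0 0 = kcbsTheta n := by
  simp [kcbsDual, kcbsTheta]

@[simp] lemma kcbsDual_zero_succ (n : ℕ) (j : Fin n) : kcbsDual n 0 j.succ = -1 := by
  simp [kcbsDual]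

@[simp] lemma kcbsDual_succ_zero (n : ℕ) (i : Fin n) : kcbsDual n i.succ 0 = -1 := by
  simp [kcbsDual]

lemma kcbsDual_succ_succ (n : ℕ) [NeZero n] (i j : Fin n) :
    kcbsDual n i.succ j.succ = if i = j then 1 else if j = i + 1 ∨ i = j + 1
      then (n - kcbsTheta n) / (2 * kcbsTheta n) else 0 := by
  simp [kcbsDual, kcbsTheta, Fin.eq_add_one_iff]

lemma dotProduct_kcbsDual_mulVec {n : ℕ} [NeZero n] (hn : 3 ≤ n) (x : Fin (n + 1) → ℝ) :
    x ⬝ᵥ kcbsDual n *ᵥ x = kcbsTheta n * x 0 ^ 2 - 2 * x 0 * ∑ i : Fin n, x i.succ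
      + ∑ i : Fin n, x i.succ ^ 2
      + 2 * ((n - kcbsTheta n) / (2 * kcbsTheta n)) * ∑ i : Fin n, x i.succ * x (i + 1).succ := by
  simp only [dotProduct, mulVec, Fin.sum_univ_succ, kcbsDual_zero_zero, kcbsDual_zero_succ,
    kcbsDual_succ_zero, kcbsDual_succ_succ, mul_add, sum_add_distrib,
    Fin.sum_mul_sum_ite_cycle_mul hn (v := fun i => x i.succ), ← sum_mul, ← mul_sum]
  ring

/-- For any odd `n ≥ 3`, the matrix `Z_n` is positive semidefinite. -/
theorem kcbsDual_posSemidef (n : ℕ) (hn : 3 ≤ n) (hodd : Odd n) :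
    (kcbsDual n).PosSemidef := by
  have : NeZero n := ⟨by omega⟩
  refine posSemidef_iff_dotProduct_mulVec.mpr ⟨kcbsDual_isHermitian n, fun x => ?_⟩
  have hc : 0 < cos (π / n) := cos_pi_div_pos hn
  have hθ : 0 < kcbsTheta n := kcbsTheta_pos hn
  set c := cos (π / n)
  set θ := kcbsTheta n
  set v : Fin n → ℝ := fun i => x i.succ
  set S := ∑ i, v i
  have hquad : x ⬝ᵥ kcbsDual n *ᵥ x
      = θ * x 0 ^ 2 - 2 * x 0 * S + ∑ i, v i ^ 2 + 2 * (2 * c)⁻¹ * ∑ i, v i * v (i + 1) := by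
    rw [dotProduct_kcbsDual_mulVec hn, sub_kcbsTheta_div_two_mul_kcbsTheta hn]
  have hsq := sum_sub_mean_mul_sub_mean_comp_perm (Equiv.refl (Fin n)) v
  have hprod := sum_sub_mean_mul_sub_mean_comp_perm (Equiv.addRight (1 : Fin n)) v
  have hcycle := cos_pi_div_mul_sum_sq_add_sum_mul_add_one_nonneg hodd (fun i => v i - S / n)
  simp only [Equiv.refl_apply, Equiv.coe_addRight, Fintype.card_fin, ← sq] at hsq hprod
  rw [hsq, hprod] at hcycle
  have hform : x ⬝ᵥ kcbsDual n *ᵥ x = θ * (x 0 - S / θ) ^ 2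
      + (c * (∑ i, v i ^ 2 - S ^ 2 / n) + (∑ i, v i * v (i + 1) - S ^ 2 / n)) / c := by
    rw [hquad, show θ = n * c / (1 + c) from rfl]
    field_simp
    ring
  rw [star_trivial, hform]
  exact add_nonneg (by positivity) (div_nonneg hcycle hc.le)
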